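/- arXiv:1902.06275 — 2 statements merged into one kernel-verified Lean document; each statement's English description precedes it below -/
import Mathlib

section
/- Optimal constant-weight zero-error codes: for every n ≥ 1 and every w ≥ 1, the set C_{q,ℓ,r}(n;w) of codewords of C_{q,ℓ,r}(n) having Hamming weight exactly w is a zero-error code for the (ℓ,r)-0-insertion channel, and every zero-error code C ⊆ S_q(n) all of whose codewords have Hamming weight exactly w satisfies |C| ≤ |C_{q,ℓ,r}(n;w)|. -/
namespace ZeroErrorDup

/-- Output relation of the (ℓ,r)-0-insertion channel acting on strings over the
alphabet A_q = {0,1,…,q−1} (encoded as lists of naturals): after each input symbol,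
`c` copies of the block `0^ℓ` are inserted, for some `c ∈ {0,1,…,r}`. -/
inductive IsOutput (ℓ r : ℕ) : List ℕ → List ℕ → Prop
  | nil : IsOutput ℓ r [] []
  | cons (a : ℕ) (c : ℕ) (hc : c ≤ r) {x y : List ℕ} :
      IsOutput ℓ r x y → IsOutput ℓ r (a :: x) (a :: (List.replicate (c * ℓ) 0 ++ y))

/-- Two strings are confusable if some string is an output of both. -/
def Confusable (ℓ r : ℕ) (x y : List ℕ) : Prop :=
  ∃ z, IsOutput ℓ r x z ∧ IsOutput ℓ r y z

/-- A set of strings is a zero-error code if every two distinct elements are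
non-confusable. -/
def ZeroErrorCode (ℓ r : ℕ) (C : Set (List ℕ)) : Prop :=
  ∀ x ∈ C, ∀ y ∈ C, x ≠ y → ¬ Confusable ℓ r x y

/-- `L ℓ r i j = ((r i + 1)(r ℓ + 1)^j − 1)/r − 1` (the division is exact). -/
def L (ℓ r i j : ℕ) : ℕ := ((r * i + 1) * (r * ℓ + 1) ^ j - 1) / r - 1

/-- The block `σ 0^u`: the symbol `σ` followed by a run of `u` zeros. -/
def block (σ u : ℕ) : List ℕ := σ :: List.replicate u 0

/-- `B q ℓ r`: the set of blocks `σ 0^{L(i,j)}` with `σ ∈ {1,…,q−1}`, `1 ≤ i ≤ ℓ`, `j ≥ 0`. -/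
def B (q ℓ r : ℕ) : Set (List ℕ) :=
  { b | ∃ σ i j : ℕ, 1 ≤ σ ∧ σ ≤ q - 1 ∧ 1 ≤ i ∧ i ≤ ℓ ∧ b = block σ (L ℓ r i j) }

/-- `S q n`: strings over `A_q` of length between 1 and `n` whose first symbol is nonzero. -/
def S (q n : ℕ) : Set (List ℕ) :=
  { x | x ≠ [] ∧ x.length ≤ n ∧ (∀ a ∈ x, a < q) ∧ x.headI ≠ 0 }

/-- `C q ℓ r n`: strings in `S q n` that are concatenations of blocks from `B q ℓ r`. -/
def C (q ℓ r n : ℕ) : Set (List ℕ) :=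
  { x | x ∈ S q n ∧ ∃ bs : List (List ℕ), (∀ b ∈ bs, b ∈ B q ℓ r) ∧ x = bs.flatten }

/-- Hamming weight: the number of nonzero symbols of a string. -/
def wt (x : List ℕ) : ℕ := (x.filter (fun a => a ≠ 0)).length

-- encoding
def enc (p : List (ℕ × ℕ)) : List ℕ := (p.map (fun pr => block pr.1 pr.2)).flatten

@[simp] lemma enc_nil : enc [] = [] := rfl

@[simp] lemma enc_cons (pr : ℕ × ℕ) (p : List (ℕ × ℕ)) :
    enc (pr :: p) = pr.1 :: (List.replicate pr.2 0 ++ enc p) := by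
  simp [enc, block]

lemma rep_app (a b : ℕ) :
    List.replicate a (0:ℕ) ++ List.replicate b 0 = List.replicate (a+b) 0 :=
  (List.replicate_add a b 0).symm

lemma isOutput_append {ℓ r : ℕ} {x y x' y' : List ℕ} (h : IsOutput ℓ r x y)
    (h' : IsOutput ℓ r x' y') : IsOutput ℓ r (x ++ x') (y ++ y') := by
  induction h with
  | nil => simpa
  | cons a c hc hx ih =>
      have := IsOutput.cons (ℓ := ℓ) (r := r) a c hc ih
      simpa [List.append_assoc] using this

lemma isOutput_zeros {ℓ r u t : ℕ} (ht : t ≤ r * u) :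
    IsOutput ℓ r (List.replicate u 0) (List.replicate (u + ℓ * t) 0) := by
  induction u generalizing t with
  | zero =>
      have : t = 0 := by simpa using ht
      subst this
      simpa using IsOutput.nil
  | succ u ih =>
      have hc : min t r ≤ r := min_le_right _ _
      have h1 : t - min t r ≤ r * u := by
        rcases le_total t r with h | h
        · simp [min_eq_left h]
        · have : r * (u+1) = r * u + r := by ring
          omega
      have hout := IsOutput.cons (ℓ := ℓ) (r := r) 0 (min t r) hc (ih h1)
      have harith : min t r * ℓ + (u + ℓ * (t - min t r)) = u + ℓ * t := by
        have h2 : min t r ≤ t := min_le_left _ _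
        have : ℓ * (t - min t r) + ℓ * min t r = ℓ * t := by
          rw [← Nat.mul_add]; congr 1; omega
        have hm : min t r * ℓ = ℓ * min t r := Nat.mul_comm _ _
        omega
      have : (0 : ℕ) :: (List.replicate (min t r * ℓ) 0 ++ List.replicate (u + ℓ * (t - min t r)) 0)
          = List.replicate (u + 1 + ℓ * t) 0 := by
        rw [rep_app, harith]
        have h3 : u + 1 + ℓ * t = (u + ℓ * t) + 1 := by omega
        rw [h3, List.replicate_succ]
      rw [this] at hout
      simpa [List.replicate_succ] using hout

lemma isOutput_block {ℓ r σ u t : ℕ} (ht : t ≤ r * (u+1)) :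
    IsOutput ℓ r (block σ u) (block σ (u + ℓ * t)) := by
  have hc : min t r ≤ r := min_le_right _ _
  have h1 : t - min t r ≤ r * u := by
    rcases le_total t r with h | h
    · simp [min_eq_left h]
    · have : r * (u+1) = r * u + r := by ring
      omega
  have hout := IsOutput.cons (ℓ := ℓ) (r := r) σ (min t r) hc (isOutput_zeros h1)
  have harith : min t r * ℓ + (u + ℓ * (t - min t r)) = u + ℓ * t := by
    have h2 : min t r ≤ t := min_le_left _ _
    have : ℓ * (t - min t r) + ℓ * min t r = ℓ * t := by
      rw [← Nat.mul_add]; congr 1; omega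
    have hm : min t r * ℓ = ℓ * min t r := Nat.mul_comm _ _
    omega
  have : List.replicate (min t r * ℓ) (0:ℕ) ++ List.replicate (u + ℓ * (t - min t r)) 0
      = List.replicate (u + ℓ * t) 0 := by rw [rep_app, harith]
  rw [this] at hout
  simpa [block] using hout

lemma rep_app_assoc (a b : ℕ) (z : List ℕ) :
    List.replicate a (0:ℕ) ++ (List.replicate b 0 ++ z) = List.replicate (a+b) 0 ++ z := by
  rw [← List.append_assoc, rep_app]

lemma cons_zero_rep (a : ℕ) (z : List ℕ) :
    (0:ℕ) :: (List.replicate a 0 ++ z) = List.replicate (1+a) 0 ++ z := by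
  rw [← rep_app, List.replicate_one]; rfl

lemma output_nil {ℓ r : ℕ} {z : List ℕ} (h : IsOutput ℓ r [] z) : z = [] := by
  cases h; rfl

lemma output_zeros_append {ℓ r u : ℕ} {x z : List ℕ}
    (h : IsOutput ℓ r (List.replicate u 0 ++ x) z) :
    ∃ t z', t ≤ r * u ∧ IsOutput ℓ r x z' ∧ z = List.replicate (u + ℓ * t) 0 ++ z' := by
  induction u generalizing z with
  | zero => exact ⟨0, z, by omega, by simpa using h, by simp⟩
  | succ u ih =>
      rw [List.replicate_succ, List.cons_append] at h
      cases h with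
      | cons a c hc h' =>
          obtain ⟨t, z', ht, hz', rfl⟩ := ih h'
          refine ⟨c + t, z', ?_, hz', ?_⟩
          · have : r * (u+1) = r * u + r := by ring
            omega
          · have harith : 1 + (c * ℓ + (u + ℓ * t)) = u + 1 + ℓ * (c + t) := by
              have : ℓ * (c + t) = ℓ * c + ℓ * t := by ring
              have hm : c * ℓ = ℓ * c := Nat.mul_comm _ _
              omega
            rw [rep_app_assoc, cons_zero_rep, harith]

lemma output_enc {ℓ r : ℕ} {p : List (ℕ × ℕ)} {z : List ℕ} (h : IsOutput ℓ r (enc p) z) :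
    ∃ p', List.Forall₂ (fun a b : ℕ × ℕ => a.1 = b.1 ∧ ∃ t, t ≤ r * (a.2+1) ∧ b.2 = a.2 + ℓ * t) p p'
      ∧ z = enc p' := by
  induction p generalizing z with
  | nil =>
      simp only [enc_nil] at h
      exact ⟨[], List.Forall₂.nil, by simpa using output_nil h⟩
  | cons pr p ih =>
      rw [enc_cons] at h
      cases h with
      | cons a c hc h' =>
          obtain ⟨t, z', ht, hz', rfl⟩ := output_zeros_append h'
          obtain ⟨p', hf, rfl⟩ := ih hz'
          refine ⟨(pr.1, pr.2 + ℓ * (c + t)) :: p', ?_, ?_⟩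
          · refine List.Forall₂.cons ⟨rfl, c + t, ?_, rfl⟩ hf
            have : r * (pr.2 + 1) = r * pr.2 + r := by ring
            omega
          · rw [enc_cons]
            simp only [List.cons.injEq, true_and]
            have harith : c * ℓ + (pr.2 + ℓ * t) = pr.2 + ℓ * (c + t) := by
              have : ℓ * (c + t) = ℓ * c + ℓ * t := by ring
              have hm : c * ℓ = ℓ * c := Nat.mul_comm _ _
              omega
            rw [rep_app_assoc, harith]

lemma enc_ne_nil (pr : ℕ × ℕ) (p : List (ℕ × ℕ)) : enc (pr :: p) ≠ [] := by
  rw [enc_cons]; simp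

lemma zero_pad_cancel : ∀ (u v : ℕ) (A B : List ℕ), (A = [] ∨ A.headI ≠ 0) →
    (B = [] ∨ B.headI ≠ 0) →
    List.replicate u 0 ++ A = List.replicate v 0 ++ B → u = v ∧ A = B := by
  intro u
  induction u with
  | zero =>
      intro v A B hA hB h
      cases v with
      | zero => simpa using h
      | succ v =>
          simp only [List.replicate_succ, List.nil_append, List.cons_append] at h
          subst h
          rcases hA with hA | hA
          · simp at hA
          · simp at hA
  | succ u ih =>
      intro v A B hA hB h
      cases v with
      | zero =>
          simp only [List.replicate_zero, List.nil_append, List.replicate_succ,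
            List.cons_append] at h
          rcases hB with hB | hB
          · subst hB; simp at h
          · rw [← h] at hB; simp at hB
      | succ v =>
          simp only [List.replicate_succ, List.cons_append, List.cons.injEq, true_and] at h
          obtain ⟨h1, h2⟩ := ih v A B hA hB h
          exact ⟨by omega, h2⟩

lemma enc_head {p : List (ℕ × ℕ)} (hp : ∀ pr ∈ p, pr.1 ≠ 0) :
    enc p = [] ∨ (enc p).headI ≠ 0 := by
  cases p with
  | nil => left; rfl
  | cons pr p => right; rw [enc_cons]; exact hp pr (by simp)

lemma enc_injOn : ∀ (p q : List (ℕ × ℕ)), (∀ pr ∈ p, pr.1 ≠ 0) → (∀ pr ∈ q, pr.1 ≠ 0) →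
    enc p = enc q → p = q := by
  intro p
  induction p with
  | nil =>
      intro q _ _ h
      cases q with
      | nil => rfl
      | cons pr q => exact absurd h.symm (enc_ne_nil pr q)
  | cons pr p ih =>
      intro q hp hq h
      cases q with
      | nil => exact absurd h (enc_ne_nil pr p)
      | cons qr q =>
          rw [enc_cons, enc_cons] at h
          rw [List.cons_eq_cons] at h
          obtain ⟨h1, h2⟩ := h
          have hp' : ∀ x ∈ p, x.1 ≠ 0 := fun x hx => hp x (by simp [hx])
          have hq' : ∀ x ∈ q, x.1 ≠ 0 := fun x hx => hq x (by simp [hx])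
          obtain ⟨hu, he⟩ := zero_pad_cancel pr.2 qr.2 (enc p) (enc q)
            (enc_head hp') (enc_head hq') h2
          have : pr = qr := Prod.ext h1 hu
          rw [this, ih q hp' hq' he]

lemma length_dropWhile_le' (p : ℕ → Bool) : ∀ (l : List ℕ), (l.dropWhile p).length ≤ l.length := by
  intro l
  induction l with
  | nil => simp
  | cons a l ih =>
      rw [List.dropWhile_cons]
      by_cases h : p a = true
      · simp only [h, if_true, List.length_cons]; omega
      · simp [h]

def dec : List ℕ → List (ℕ × ℕ)
  | [] => []
  | a :: x => (a, (x.takeWhile (· == 0)).length) :: dec (x.dropWhile (· == 0))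
  termination_by x => x.length
  decreasing_by
    simp only [List.length_cons]
    have := length_dropWhile_le' (· == 0) x
    omega

lemma dropWhile_head_not (p : ℕ → Bool) : ∀ (l : List ℕ) {b : ℕ} {l' : List ℕ},
    l.dropWhile p = b :: l' → p b = false := by
  intro l
  induction l with
  | nil => intro b l' h; simp at h
  | cons a l ih =>
      intro b l' h
      rw [List.dropWhile_cons] at h
      by_cases ha : p a = true
      · rw [if_pos ha] at h; exact ih h
      · rw [if_neg ha] at h
        obtain ⟨rfl, _⟩ := List.cons_eq_cons.mp h
        simpa using ha

lemma enc_dec : ∀ (x : List ℕ), (x = [] ∨ x.headI ≠ 0) →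
    enc (dec x) = x ∧ ∀ pr ∈ dec x, pr.1 ≠ 0 := by
  intro x
  induction x using dec.induct with
  | case1 => intro _; exact ⟨by simp [dec], by simp [dec]⟩
  | case2 a x ih =>
      intro hx
      have ha : a ≠ 0 := by
        rcases hx with hx | hx
        · simp at hx
        · simpa using hx
      have hdrop : x.dropWhile (· == 0) = [] ∨ (x.dropWhile (· == 0)).headI ≠ 0 := by
        rcases h : x.dropWhile (· == 0) with _ | ⟨b, l⟩
        · left; rfl
        · right
          have := dropWhile_head_not (· == 0) x h
          simpa using this
      obtain ⟨ih1, ih2⟩ := ih hdrop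
      have hd : dec (a :: x)
          = (a, (x.takeWhile (· == 0)).length) :: dec (x.dropWhile (· == 0)) := by
        simp only [dec]
      constructor
      · rw [hd, enc_cons, ih1]
        simp only [List.cons.injEq, true_and]
        have htw : List.replicate (x.takeWhile (· == 0)).length 0 = x.takeWhile (· == 0) := by
          apply (List.eq_replicate_iff.mpr ⟨rfl, ?_⟩).symm
          intro b hb
          have := List.mem_takeWhile_imp hb
          simpa using this
        rw [htw, List.takeWhile_append_dropWhile]
      · intro pr hpr
        rw [hd] at hpr
        rcases List.mem_cons.mp hpr with h | h
        · rw [h]; exact ha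
        · exact ih2 pr h

lemma fst_mem_enc {p : List (ℕ × ℕ)} {pr : ℕ × ℕ} (h : pr ∈ p) : pr.1 ∈ enc p := by
  induction p with
  | nil => simp at h
  | cons qr p ih =>
      rw [enc_cons]
      rcases List.mem_cons.mp h with h | h
      · rw [h]; simp
      · simp [ih h]

lemma mem_enc_cases {p : List (ℕ × ℕ)} {a : ℕ} (h : a ∈ enc p) :
    a = 0 ∨ ∃ pr ∈ p, a = pr.1 := by
  induction p with
  | nil => simp at h
  | cons qr p ih =>
      rw [enc_cons] at h
      rcases List.mem_cons.mp h with h | h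
      · right; exact ⟨qr, by simp, h⟩
      · rcases List.mem_append.mp h with h | h
        · left; exact List.eq_of_mem_replicate h
        · rcases ih h with h | ⟨pr, hpr, ha⟩
          · left; exact h
          · right; exact ⟨pr, by simp [hpr], ha⟩

lemma wt_enc {p : List (ℕ × ℕ)} (hp : ∀ pr ∈ p, pr.1 ≠ 0) : wt (enc p) = p.length := by
  induction p with
  | nil => rfl
  | cons pr p ih =>
      have h1 : pr.1 ≠ 0 := hp pr (by simp)
      have hp' : ∀ x ∈ p, x.1 ≠ 0 := fun x hx => hp x (by simp [hx])
      have hrep : (List.replicate pr.2 0).filter (fun a => decide (a ≠ 0)) = [] :=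
        List.filter_eq_nil_iff.mpr (fun b hb => by simp [List.eq_of_mem_replicate hb])
      simp only [wt] at ih ⊢
      rw [enc_cons, List.filter_cons, List.filter_append, hrep, List.nil_append]
      rw [if_pos (by simpa using h1)]
      simp only [List.nil_append, List.length_cons]
      rw [ih hp']

lemma enc_length (p : List (ℕ × ℕ)) :
    (enc p).length = (p.map (fun pr => pr.2 + 1)).sum := by
  induction p with
  | nil => rfl
  | cons pr p ih =>
      rw [enc_cons]
      simp only [List.length_cons, List.length_append, List.length_replicate, List.map_cons,
        List.sum_cons, ih]
      omega

def F (ℓ r i : ℕ) : ℕ → ℕ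
  | 0 => i - 1
  | j+1 => F ℓ r i j + ℓ * (r * (F ℓ r i j + 1) + 1)

lemma F_key (ℓ r i : ℕ) (hr : 1 ≤ r) (hi : 1 ≤ i) :
    ∀ j, r * (F ℓ r i j + 1) + 1 = (r * i + 1) * (r * ℓ + 1) ^ j := by
  intro j
  induction j with
  | zero =>
      show r * (i - 1 + 1) + 1 = (r * i + 1) * (r * ℓ + 1) ^ 0
      have h : i - 1 + 1 = i := by omega
      rw [h, pow_zero, mul_one]
  | succ j ih =>
      show r * (F ℓ r i j + ℓ * (r * (F ℓ r i j + 1) + 1) + 1) + 1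
          = (r * i + 1) * (r * ℓ + 1) ^ (j+1)
      calc r * (F ℓ r i j + ℓ * (r * (F ℓ r i j + 1) + 1) + 1) + 1
          = (r * (F ℓ r i j + 1) + 1) * (r * ℓ + 1) := by ring
        _ = ((r * i + 1) * (r * ℓ + 1) ^ j) * (r * ℓ + 1) := by rw [ih]
        _ = (r * i + 1) * (r * ℓ + 1) ^ (j+1) := by rw [pow_succ]; ring

lemma L_eq_F (ℓ r i : ℕ) (hr : 1 ≤ r) (hi : 1 ≤ i) (j : ℕ) :
    L ℓ r i j = F ℓ r i j := by
  have h := F_key ℓ r i hr hi j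
  rw [L, ← h, Nat.add_sub_cancel, Nat.mul_div_cancel_left _ (by omega : 0 < r),
    Nat.add_sub_cancel]

lemma F_lt_succ (ℓ r i : ℕ) (hℓ : 1 ≤ ℓ) (j : ℕ) : F ℓ r i j < F ℓ r i (j+1) := by
  show F ℓ r i j < F ℓ r i j + ℓ * (r * (F ℓ r i j + 1) + 1)
  have h1 : 1 * 1 ≤ ℓ * (r * (F ℓ r i j + 1) + 1) := Nat.mul_le_mul hℓ (by omega)
  omega

lemma F_strictMono (ℓ r i : ℕ) (hℓ : 1 ≤ ℓ) : StrictMono (F ℓ r i) :=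
  strictMono_nat_of_lt_succ (F_lt_succ ℓ r i hℓ)

lemma F_ge (ℓ r i : ℕ) (hℓ : 1 ≤ ℓ) : ∀ j, j ≤ F ℓ r i j := by
  intro j
  induction j with
  | zero => omega
  | succ j ih => have := F_lt_succ ℓ r i hℓ j; omega

lemma F_mod (ℓ r i : ℕ) : ∀ j, F ℓ r i j % ℓ = (i - 1) % ℓ := by
  intro j
  induction j with
  | zero => rfl
  | succ j ih =>
      show (F ℓ r i j + ℓ * (r * (F ℓ r i j + 1) + 1)) % ℓ = _
      rw [Nat.add_mul_mod_self_left, ih]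

def cano (ℓ r u : ℕ) : ℕ :=
  F ℓ r (u % ℓ + 1) (Nat.findGreatest (fun j => F ℓ r (u % ℓ + 1) j ≤ u) (u+1))

lemma cano_le (ℓ r u : ℕ) (hℓ : 1 ≤ ℓ) : cano ℓ r u ≤ u := by
  have h0 : F ℓ r (u % ℓ + 1) 0 ≤ u := by
    show u % ℓ + 1 - 1 ≤ u
    have := Nat.mod_le u ℓ
    omega
  exact Nat.findGreatest_spec (P := fun j => F ℓ r (u % ℓ + 1) j ≤ u) (Nat.zero_le _) h0

lemma cano_mod (ℓ r u : ℕ) (hℓ : 1 ≤ ℓ) : cano ℓ r u % ℓ = u % ℓ := by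
  rw [cano, F_mod]
  have h1 : u % ℓ < ℓ := Nat.mod_lt _ (by omega)
  simp only [Nat.add_sub_cancel]
  exact Nat.mod_eq_of_lt h1

lemma cano_upper (ℓ r u : ℕ) (hℓ : 1 ≤ ℓ) :
    u < cano ℓ r u + ℓ * (r * (cano ℓ r u + 1) + 1) := by
  have h0 : F ℓ r (u % ℓ + 1) 0 ≤ u := by
    show u % ℓ + 1 - 1 ≤ u
    have := Nat.mod_le u ℓ
    omega
  set i := u % ℓ + 1 with hi
  set j := Nat.findGreatest (fun j => F ℓ r i j ≤ u) (u+1) with hj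
  have hspec : F ℓ r i j ≤ u := by
    rw [hj]
    exact Nat.findGreatest_spec (P := fun j => F ℓ r i j ≤ u) (Nat.zero_le _) h0
  have hjle : j ≤ u := le_trans (F_ge ℓ r i hℓ j) hspec
  have hnot : ¬ F ℓ r i (j+1) ≤ u :=
    Nat.findGreatest_is_greatest (P := fun j' => F ℓ r i j' ≤ u) (n := u+1) (k := j+1)
      (by omega) (by omega)
  have hc : cano ℓ r u = F ℓ r i j := rfl
  have hstep : F ℓ r i (j+1) = F ℓ r i j + ℓ * (r * (F ℓ r i j + 1) + 1) := rfl
  rw [hc]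
  omega

lemma cano_spec (ℓ r u : ℕ) (hℓ : 1 ≤ ℓ) :
    ∃ s, s ≤ r * (cano ℓ r u + 1) ∧ u = cano ℓ r u + ℓ * s := by
  have hle := cano_le ℓ r u hℓ
  have hmod := cano_mod ℓ r u hℓ
  have hup := cano_upper ℓ r u hℓ
  set c := cano ℓ r u
  have hdvd : ℓ ∣ u - c := (Nat.modEq_iff_dvd' hle).mp hmod
  obtain ⟨s, hs⟩ := hdvd
  refine ⟨s, ?_, by omega⟩
  have h1 : ℓ * s < ℓ * (r * (c + 1) + 1) := by omega
  have h2 : s < r * (c + 1) + 1 := Nat.lt_of_mul_lt_mul_left h1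
  omega

lemma cano_F (ℓ r : ℕ) (hℓ : 1 ≤ ℓ) {i : ℕ} (hi1 : 1 ≤ i) (hi2 : i ≤ ℓ) (j : ℕ) :
    cano ℓ r (F ℓ r i j) = F ℓ r i j := by
  set u := F ℓ r i j with hu
  have hmod : u % ℓ = i - 1 := by
    rw [hu, F_mod]
    exact Nat.mod_eq_of_lt (by omega)
  have hiu : u % ℓ + 1 = i := by omega
  have hfind : Nat.findGreatest (fun j' => F ℓ r i j' ≤ u) (u+1) = j := by
    rw [Nat.findGreatest_eq_iff]
    refine ⟨by have := F_ge ℓ r i hℓ j; omega, fun _ => le_refl u, ?_⟩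
    intro m hm _
    have hlt : u < F ℓ r i m := F_strictMono ℓ r i hℓ hm
    omega
  simp only [cano, hiu]
  rw [hfind]

lemma cano_eq_of (ℓ r u v : ℕ) (hℓ : 1 ≤ ℓ) (hu : cano ℓ r u = u)
    (hmod : v % ℓ = u % ℓ) (huv : u ≤ v) (hub : v ≤ u + ℓ * (r * (u + 1))) :
    cano ℓ r v = u := by
  set i := u % ℓ + 1 with hi
  set j := Nat.findGreatest (fun j => F ℓ r i j ≤ u) (u+1) with hj
  have hcano : cano ℓ r u = F ℓ r i j := rfl
  have hFj : F ℓ r i j = u := by rw [← hcano, hu]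
  have hiv : v % ℓ + 1 = i := by rw [hmod]
  have hfind : Nat.findGreatest (fun j' => F ℓ r i j' ≤ v) (v+1) = j := by
    rw [Nat.findGreatest_eq_iff]
    refine ⟨?_, fun _ => by omega, ?_⟩
    · have := F_ge ℓ r i hℓ j; omega
    · intro m hm _
      have h1 : F ℓ r i (j+1) ≤ F ℓ r i m := (F_strictMono ℓ r i hℓ).monotone hm
      have h2 : F ℓ r i (j+1) = F ℓ r i j + ℓ * (r * (F ℓ r i j + 1) + 1) := rfl
      rw [hFj] at h2
      have h3 : ℓ * (r * (u+1)) < ℓ * (r * (u + 1) + 1) :=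
        mul_lt_mul_of_pos_left (by omega) (by omega)
      omega
  simp only [cano, hiv]
  rw [hfind, hFj]

def RunConf (ℓ r u v : ℕ) : Prop :=
  ∃ s t, s ≤ r * (u + 1) ∧ t ≤ r * (v + 1) ∧ u + ℓ * s = v + ℓ * t

lemma runConf_symm {ℓ r u v : ℕ} (h : RunConf ℓ r u v) : RunConf ℓ r v u := by
  obtain ⟨s, t, hs, ht, heq⟩ := h
  exact ⟨t, s, ht, hs, heq.symm⟩

lemma runConf_of_cano_eq (ℓ r u v : ℕ) (hℓ : 1 ≤ ℓ) (h : cano ℓ r u = cano ℓ r v) :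
    RunConf ℓ r u v := by
  obtain ⟨a, ha, hua⟩ := cano_spec ℓ r u hℓ
  obtain ⟨b, hb, hvb⟩ := cano_spec ℓ r v hℓ
  rw [← h] at hvb hb
  set c := cano ℓ r u
  have hcu : c ≤ u := cano_le ℓ r u hℓ
  have hcv : c ≤ v := by omega
  refine ⟨b, a, ?_, ?_, ?_⟩
  · exact le_trans hb (Nat.mul_le_mul_left r (by omega))
  · exact le_trans ha (Nat.mul_le_mul_left r (by omega))
  · omega

lemma eq_of_canonical (ℓ r u v : ℕ) (hℓ : 1 ≤ ℓ) (hu : cano ℓ r u = u)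
    (hv : cano ℓ r v = v) (h : RunConf ℓ r u v) : u = v := by
  obtain ⟨s, t, hs, ht, heq⟩ := h
  have h1 : (u + ℓ * s) % ℓ = u % ℓ := Nat.add_mul_mod_self_left u ℓ s
  have h2 : (v + ℓ * t) % ℓ = v % ℓ := Nat.add_mul_mod_self_left v ℓ t
  rw [heq] at h1
  have hmod : u % ℓ = v % ℓ := h1.symm.trans h2
  rcases le_total u v with hle | hle
  · have h3 : ℓ * s ≤ ℓ * (r * (u+1)) := Nat.mul_le_mul_left ℓ hs
    have hub : v ≤ u + ℓ * (r * (u + 1)) := by omega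
    have := cano_eq_of ℓ r u v hℓ hu hmod.symm hle hub
    rw [hv] at this
    omega
  · have h3 : ℓ * t ≤ ℓ * (r * (v+1)) := Nat.mul_le_mul_left ℓ ht
    have hub : u ≤ v + ℓ * (r * (v + 1)) := by omega
    have := cano_eq_of ℓ r v u hℓ hv hmod hle hub
    rw [hu] at this
    omega

lemma enc_cons2 (pr : ℕ × ℕ) (p : List (ℕ × ℕ)) :
    enc (pr :: p) = block pr.1 pr.2 ++ enc p := by
  simp [enc, block]

lemma confusable_of_forall₂ {ℓ r : ℕ} {p q : List (ℕ × ℕ)}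
    (h : List.Forall₂ (fun a b : ℕ × ℕ => a.1 = b.1 ∧ RunConf ℓ r a.2 b.2) p q) :
    Confusable ℓ r (enc p) (enc q) := by
  induction h with
  | nil => exact ⟨[], IsOutput.nil, IsOutput.nil⟩
  | @cons a b p' q' hab hf ih =>
      obtain ⟨z, hz1, hz2⟩ := ih
      obtain ⟨hfst, s, t, hs, ht, heq⟩ := hab
      refine ⟨block a.1 (a.2 + ℓ * s) ++ z, ?_, ?_⟩
      · rw [enc_cons2]
        exact isOutput_append (isOutput_block hs) hz1
      · rw [enc_cons2]
        have hbl : block a.1 (a.2 + ℓ * s) = block b.1 (b.2 + ℓ * t) := by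
          rw [hfst, heq]
        rw [hbl]
        exact isOutput_append (isOutput_block ht) hz2

lemma forall₂_snd_mem {α β : Type*} {R : α → β → Prop} :
    ∀ {l₁ : List α} {l₂ : List β}, List.Forall₂ R l₁ l₂ → ∀ b ∈ l₂, ∃ a ∈ l₁, R a b := by
  intro l₁ l₂ h
  induction h with
  | nil => simp
  | @cons a b l₁' l₂' hab hf ih =>
      intro c hc
      rcases List.mem_cons.mp hc with rfl | hc
      · exact ⟨a, by simp, hab⟩
      · obtain ⟨a', ha', hr⟩ := ih c hc
        exact ⟨a', by simp [ha'], hr⟩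

lemma forall₂_comp {α β γ : Type*} {R : α → β → Prop} {S : β → γ → Prop} {T : α → γ → Prop}
    (comp : ∀ a b c, R a b → S b c → T a c) :
    ∀ {l₁ : List α} {l₂ : List β} {l₃ : List γ},
      List.Forall₂ R l₁ l₂ → List.Forall₂ S l₂ l₃ → List.Forall₂ T l₁ l₃ := by
  intro l₁ l₂ l₃ h1
  induction h1 generalizing l₃ with
  | nil => intro h2; cases h2; exact List.Forall₂.nil
  | cons hab hf ih =>
      intro h2
      cases h2 with
      | cons hbc h2' => exact List.Forall₂.cons (comp _ _ _ hab hbc) (ih h2')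

lemma forall₂_of_confusable {ℓ r : ℕ} {p q : List (ℕ × ℕ)}
    (hp : ∀ pr ∈ p, pr.1 ≠ 0) (hq : ∀ pr ∈ q, pr.1 ≠ 0)
    (h : Confusable ℓ r (enc p) (enc q)) :
    List.Forall₂ (fun a b : ℕ × ℕ => a.1 = b.1 ∧ RunConf ℓ r a.2 b.2) p q := by
  obtain ⟨z, hz1, hz2⟩ := h
  obtain ⟨p1, hf1, rfl⟩ := output_enc hz1
  obtain ⟨q1, hf2, hzq⟩ := output_enc hz2
  have hp1 : ∀ pr ∈ p1, pr.1 ≠ 0 := by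
    intro pr hpr
    obtain ⟨a, ha, hr⟩ := forall₂_snd_mem hf1 pr hpr
    rw [← hr.1]
    exact hp a ha
  have hq1 : ∀ pr ∈ q1, pr.1 ≠ 0 := by
    intro pr hpr
    obtain ⟨a, ha, hr⟩ := forall₂_snd_mem hf2 pr hpr
    rw [← hr.1]
    exact hq a ha
  have hpq : p1 = q1 := enc_injOn p1 q1 hp1 hq1 hzq
  subst hpq
  exact forall₂_comp
    (T := fun a b : ℕ × ℕ => a.1 = b.1 ∧ RunConf ℓ r a.2 b.2)
    (S := fun b c : ℕ × ℕ => c.1 = b.1 ∧ ∃ t, t ≤ r * (c.2+1) ∧ b.2 = c.2 + ℓ * t)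
    (fun a b c hab hbc => by
      obtain ⟨hf1', s, hs, hes⟩ := hab
      obtain ⟨hf2', t, ht, het⟩ := hbc
      exact ⟨hf1'.trans hf2'.symm, s, t, hs, ht, by omega⟩)
    hf1 hf2.flip

lemma blocks_decomp (q ℓ r : ℕ) (hℓ : 1 ≤ ℓ) (hr : 1 ≤ r) :
    ∀ (bs : List (List ℕ)), (∀ b ∈ bs, b ∈ B q ℓ r) →
    ∃ p : List (ℕ × ℕ), bs.flatten = enc p ∧
      ∀ pr ∈ p, 1 ≤ pr.1 ∧ pr.1 ≤ q - 1 ∧ cano ℓ r pr.2 = pr.2 := by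
  intro bs
  induction bs with
  | nil => intro _; exact ⟨[], rfl, by simp⟩
  | cons b bs ih =>
      intro hbs
      obtain ⟨p, hp1, hp2⟩ := ih (fun b' hb' => hbs b' (by simp [hb']))
      obtain ⟨σ, i, j, hσ1, hσ2, hi1, hi2, rfl⟩ := hbs b (by simp)
      refine ⟨(σ, L ℓ r i j) :: p, ?_, ?_⟩
      · rw [List.flatten_cons, hp1, enc_cons2]
      · intro pr hpr
        rcases List.mem_cons.mp hpr with rfl | hpr
        · exact ⟨hσ1, hσ2, by
            rw [L_eq_F ℓ r i hr hi1]
            exact cano_F ℓ r hℓ hi1 hi2 j⟩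
        · exact hp2 pr hpr

lemma eq_of_forall₂_canonical {ℓ r : ℕ} (hℓ : 1 ≤ ℓ) :
    ∀ {p q : List (ℕ × ℕ)}, (∀ pr ∈ p, cano ℓ r pr.2 = pr.2) →
      (∀ pr ∈ q, cano ℓ r pr.2 = pr.2) →
      List.Forall₂ (fun a b : ℕ × ℕ => a.1 = b.1 ∧ RunConf ℓ r a.2 b.2) p q → p = q := by
  intro p q hp hq h
  induction h with
  | nil => rfl
  | @cons a b p' q' hab hf ih =>
      have h1 : a = b := by
        have hc1 : cano ℓ r a.2 = a.2 := (hp a (by simp))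
        have hc2 : cano ℓ r b.2 = b.2 := (hq b (by simp))
        exact Prod.ext hab.1 (eq_of_canonical ℓ r a.2 b.2 hℓ hc1 hc2 hab.2)
      rw [h1, ih (fun pr hpr => hp pr (by simp [hpr])) (fun pr hpr => hq pr (by simp [hpr]))]

lemma part1 (q ℓ r n w : ℕ) (hℓ : 1 ≤ ℓ) (hr : 1 ≤ r) :
    ZeroErrorCode ℓ r { x | x ∈ C q ℓ r n ∧ wt x = w } := by
  rintro x ⟨hxC, -⟩ y ⟨hyC, -⟩ hne hconf
  obtain ⟨-, bsx, hbsx, rfl⟩ := hxC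
  obtain ⟨-, bsy, hbsy, rfl⟩ := hyC
  obtain ⟨p, hp1, hp2⟩ := blocks_decomp q ℓ r hℓ hr bsx hbsx
  obtain ⟨p', hq1, hq2⟩ := blocks_decomp q ℓ r hℓ hr bsy hbsy
  rw [hp1, hq1] at hne hconf
  apply hne
  have hpf : ∀ pr ∈ p, pr.1 ≠ 0 := fun pr h => by have := (hp2 pr h).1; omega
  have hqf : ∀ pr ∈ p', pr.1 ≠ 0 := fun pr h => by have := (hq2 pr h).1; omega
  have hf := forall₂_of_confusable hpf hqf hconf
  rw [eq_of_forall₂_canonical hℓ (fun pr h => (hp2 pr h).2.2) (fun pr h => (hq2 pr h).2.2) hf]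

def Phi (ℓ r : ℕ) (x : List ℕ) : List ℕ :=
  enc ((dec x).map (fun pr => (pr.1, cano ℓ r pr.2)))

lemma cano_eq_L (ℓ r u : ℕ) (hℓ : 1 ≤ ℓ) (hr : 1 ≤ r) :
    ∃ i j, 1 ≤ i ∧ i ≤ ℓ ∧ cano ℓ r u = L ℓ r i j := by
  refine ⟨u % ℓ + 1, Nat.findGreatest (fun j => F ℓ r (u % ℓ + 1) j ≤ u) (u+1), by omega, ?_, ?_⟩
  · have := Nat.mod_lt u (show 0 < ℓ by omega)
    omega
  · rw [L_eq_F ℓ r _ hr (by omega)]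
    rfl

lemma phi_mem (q ℓ r n : ℕ) (hq : 2 ≤ q) (hℓ : 1 ≤ ℓ) (hr : 1 ≤ r) {x : List ℕ}
    (hx : x ∈ S q n) : Phi ℓ r x ∈ C q ℓ r n ∧ wt (Phi ℓ r x) = wt x := by
  obtain ⟨hne, hlen, hlt, hhead⟩ := hx
  obtain ⟨hencdec, hfst⟩ := enc_dec x (Or.inr hhead)
  set p := dec x with hp
  set f : ℕ × ℕ → ℕ × ℕ := fun pr => (pr.1, cano ℓ r pr.2) with hf
  have hfst' : ∀ pr ∈ p.map f, pr.1 ≠ 0 := by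
    intro pr hpr
    obtain ⟨qr, hqr, rfl⟩ := List.mem_map.mp hpr
    exact hfst qr hqr
  have hmem : ∀ pr ∈ p, pr.1 ∈ x := by
    intro pr hpr
    rw [← hencdec]
    exact fst_mem_enc hpr
  have hpne : p ≠ [] := by
    intro h
    rw [h] at hencdec
    exact hne hencdec.symm
  have hPhine : Phi ℓ r x ≠ [] := by
    show enc (p.map f) ≠ []
    rcases hmap : p.map f with _ | ⟨pr, p'⟩
    · rw [List.map_eq_nil_iff] at hmap
      exact absurd hmap hpne
    · exact enc_ne_nil pr p'
  refine ⟨⟨⟨hPhine, ?_, ?_, ?_⟩, ?_⟩, ?_⟩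
  · -- length ≤ n
    show (enc (p.map f)).length ≤ n
    rw [enc_length, List.map_map]
    have h1 : ((p.map ((fun pr : ℕ × ℕ => pr.2 + 1) ∘ f)).sum)
        ≤ (p.map (fun pr : ℕ × ℕ => pr.2 + 1)).sum := by
      apply List.sum_le_sum
      intro pr hpr
      have := cano_le ℓ r pr.2 hℓ
      simp only [Function.comp, hf]
      omega
    have h2 : (p.map (fun pr : ℕ × ℕ => pr.2 + 1)).sum = x.length := by
      rw [← enc_length, hencdec]
    omega
  · -- entries < q
    intro a ha
    rcases mem_enc_cases ha with rfl | ⟨pr, hpr, rfl⟩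
    · omega
    · obtain ⟨qr, hqr, rfl⟩ := List.mem_map.mp hpr
      exact hlt _ (hmem qr hqr)
  · -- head ≠ 0
    rcases enc_head hfst' with h | h
    · exact absurd h hPhine
    · exact h
  · -- blocks
    refine ⟨(p.map f).map (fun pr => block pr.1 pr.2), ?_, ?_⟩
    swap
    · show enc (p.map f) = ((p.map f).map (fun pr => block pr.1 pr.2)).flatten
      rfl
    intro b hb
    obtain ⟨pr, hpr, rfl⟩ := List.mem_map.mp hb
    obtain ⟨qr, hqr, rfl⟩ := List.mem_map.mp hpr
    obtain ⟨i, j, hi1, hi2, hL⟩ := cano_eq_L ℓ r qr.2 hℓ hr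
    refine ⟨qr.1, i, j, ?_, ?_, hi1, hi2, ?_⟩
    · have := hfst qr hqr
      omega
    · have := hlt _ (hmem qr hqr)
      omega
    · show block qr.1 (cano ℓ r qr.2) = block qr.1 (L ℓ r i j)
      rw [hL]
  · -- weight
    show wt (enc (p.map f)) = wt x
    rw [wt_enc hfst', List.length_map, ← hencdec, wt_enc hfst]

lemma forall₂_of_map_eq {α β : Type*} {f : α → β} :
    ∀ {l₁ l₂ : List α}, l₁.map f = l₂.map f →
      List.Forall₂ (fun a b => f a = f b) l₁ l₂ := by
  intro l₁
  induction l₁ with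
  | nil =>
      intro l₂ h
      cases l₂ with
      | nil => exact List.Forall₂.nil
      | cons b l₂ => simp at h
  | cons a l₁ ih =>
      intro l₂ h
      cases l₂ with
      | nil => simp at h
      | cons b l₂ =>
          simp only [List.map_cons, List.cons_eq_cons] at h
          exact List.Forall₂.cons h.1 (ih h.2)

lemma phi_conf (ℓ r : ℕ) (hℓ : 1 ≤ ℓ) {x y : List ℕ}
    (hx : x = [] ∨ x.headI ≠ 0) (hy : y = [] ∨ y.headI ≠ 0)
    (h : Phi ℓ r x = Phi ℓ r y) : Confusable ℓ r x y := by
  obtain ⟨hex, hfx⟩ := enc_dec x hx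
  obtain ⟨hey, hfy⟩ := enc_dec y hy
  set f : ℕ × ℕ → ℕ × ℕ := fun pr => (pr.1, cano ℓ r pr.2) with hf
  have hmap : (dec x).map f = (dec y).map f := by
    apply enc_injOn
    · intro pr hpr
      obtain ⟨qr, hqr, rfl⟩ := List.mem_map.mp hpr
      exact hfx qr hqr
    · intro pr hpr
      obtain ⟨qr, hqr, rfl⟩ := List.mem_map.mp hpr
      exact hfy qr hqr
    · exact h
  have hforall : List.Forall₂ (fun a b : ℕ × ℕ => a.1 = b.1 ∧ RunConf ℓ r a.2 b.2)
      (dec x) (dec y) := by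
    apply (forall₂_of_map_eq hmap).imp
    intro a b hab
    have h1 := congrArg Prod.fst hab
    have h2 := congrArg Prod.snd hab
    exact ⟨h1, runConf_of_cano_eq ℓ r a.2 b.2 hℓ h2⟩
  have hc := confusable_of_forall₂ hforall
  rw [hex, hey] at hc
  exact hc

lemma map_mod_eq {q : ℕ} : ∀ (l : List ℕ), (∀ a ∈ l, a < q) → l.map (· % q) = l := by
  intro l
  induction l with
  | nil => intro _; rfl
  | cons a l ih =>
      intro h
      have ha : a < q := h a (by simp)
      simp only [List.map_cons, Nat.mod_eq_of_lt ha]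
      rw [ih (fun b hb => h b (by simp [hb]))]

lemma S_finite (q n : ℕ) (hq : 1 ≤ q) : (S q n).Finite := by
  have h0 : 0 < q := by omega
  set g : List ℕ → List (Fin q) := fun x => x.map (fun a => (⟨a % q, Nat.mod_lt _ h0⟩ : Fin q))
    with hg
  apply Set.Finite.of_finite_image (f := g)
  · apply Set.Finite.subset (List.finite_length_le (Fin q) n)
    rintro _ ⟨x, hx, rfl⟩
    simp only [Set.mem_setOf_eq, hg, List.length_map]
    exact hx.2.1
  · intro x hx y hy hxy
    have hvx : (g x).map Fin.val = x := by
      rw [hg]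
      simp only [List.map_map]
      exact map_mod_eq x hx.2.2.1
    have hvy : (g y).map Fin.val = y := by
      rw [hg]
      simp only [List.map_map]
      exact map_mod_eq y hy.2.2.1
    rw [← hvx, ← hvy, hxy]

lemma part2 (q ℓ r n w : ℕ) (hq : 2 ≤ q) (hℓ : 1 ≤ ℓ) (hr : 1 ≤ r)
    (Code : Set (List ℕ)) (hsub : Code ⊆ S q n) (hzero : ZeroErrorCode ℓ r Code)
    (hwt : ∀ x ∈ Code, wt x = w) :
    Code.ncard ≤ { x | x ∈ C q ℓ r n ∧ wt x = w }.ncard := by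
  have hTfin : { x | x ∈ C q ℓ r n ∧ wt x = w }.Finite := by
    apply Set.Finite.subset (S_finite q n (by omega))
    intro x hx
    exact hx.1.1
  have himg : Phi ℓ r '' Code ⊆ { x | x ∈ C q ℓ r n ∧ wt x = w } := by
    rintro _ ⟨x, hx, rfl⟩
    obtain ⟨h1, h2⟩ := phi_mem q ℓ r n hq hℓ hr (hsub hx)
    exact ⟨h1, by rw [h2, hwt x hx]⟩
  have hinj : Set.InjOn (Phi ℓ r) Code := by
    intro x hx y hy h
    by_contra hne
    exact hzero x hx y hy hne
      (phi_conf ℓ r hℓ (Or.inr (hsub hx).2.2.2) (Or.inr (hsub hy).2.2.2) h)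
  calc Code.ncard = (Phi ℓ r '' Code).ncard := (Set.ncard_image_of_injOn hinj).symm
    _ ≤ _ := Set.ncard_le_ncard himg hTfin

/-- for every `n ≥ 1` and `w ≥ 1`, the set of codewords of `C q ℓ r n`
of Hamming weight exactly `w` is a zero-error code for the (ℓ,r)-0-insertion channel,
and every zero-error code `Code ⊆ S q n` all of whose codewords have Hamming weight
exactly `w` satisfies `|Code| ≤ |{x ∈ C q ℓ r n | wt x = w}|`. -/
theorem stmt17 (q ℓ r n w : ℕ) (hq : 2 ≤ q) (hℓ : 1 ≤ ℓ) (hr : 1 ≤ r)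
    (hn : 1 ≤ n) (hw : 1 ≤ w) :
    ZeroErrorCode ℓ r { x | x ∈ C q ℓ r n ∧ wt x = w } ∧
    (∀ Code : Set (List ℕ), Code ⊆ S q n → ZeroErrorCode ℓ r Code →
      (∀ x ∈ Code, wt x = w) →
      Code.ncard ≤ { x | x ∈ C q ℓ r n ∧ wt x = w }.ncard) := by
  refine ⟨part1 q ℓ r n w hℓ hr, ?_⟩
  intro Code hsub hzero hwt
  exact part2 q ℓ r n w hq hℓ hr Code hsub hzero hwt

end ZeroErrorDup
end

section
/- Unbounded-insertion case (r = ∞): for every n ≥ 1, the set D(n) of strings in S_q(n) that contain no run of ℓ or more consecutive zeros is a zero-error code for the (ℓ,∞)-0-insertion channel, and every zero-error code C ⊆ S_q(n) for this channel satisfies |C| ≤ |D(n)|. -/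
/-! Deleting blocks `0^ℓ` from right to left shrinks every maximal run of zeros to its length
mod `ℓ`. This normal form `reduce ℓ x` is invariant under the channel, fixes every `0^ℓ`-free
string, and every string with nonzero first symbol is an output of its normal form. So two
confusable strings of `D` coincide, and on a zero-error code inside `S` the map `reduce ℓ` is
injective with values in `D`. -/

namespace ZeroErrorDup

/-- Output relation of the (ℓ,∞)-0-insertion channel: after each input symbol an
arbitrary number of copies of the block `0^ℓ` is inserted. -/
inductive IsOutputInf (ℓ : ℕ) : List ℕ → List ℕ → Prop
  | nil : IsOutputInf ℓ [] []
  | cons (a : ℕ) (c : ℕ) {x y : List ℕ} :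
      IsOutputInf ℓ x y → IsOutputInf ℓ (a :: x) (a :: (List.replicate (c * ℓ) 0 ++ y))

/-- Two strings are confusable if some string is an output of both. -/
def ConfusableInf (ℓ : ℕ) (x y : List ℕ) : Prop :=
  ∃ z, IsOutputInf ℓ x z ∧ IsOutputInf ℓ y z

/-- A set of strings is a zero-error code if every two distinct elements are
non-confusable. -/
def ZeroErrorCodeInf (ℓ : ℕ) (C : Set (List ℕ)) : Prop :=
  ∀ x ∈ C, ∀ y ∈ C, x ≠ y → ¬ ConfusableInf ℓ x y

/-- `D q ℓ n`: strings in `S q n` containing no run of `ℓ` (or more) consecutive zeros. -/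
def D (q ℓ n : ℕ) : Set (List ℕ) :=
  { x | x ∈ S q n ∧ ¬ (List.replicate ℓ 0 <:+: x) }

open List

def dropBlock (ℓ : ℕ) (s : List ℕ) : List ℕ :=
  if replicate ℓ 0 <+: s then s.drop ℓ else s

def reduce (ℓ : ℕ) (x : List ℕ) : List ℕ :=
  x.foldr (fun a r => dropBlock ℓ (a :: r)) []

theorem reduce_cons (ℓ a : ℕ) (x : List ℕ) :
    reduce ℓ (a :: x) = dropBlock ℓ (a :: reduce ℓ x) := rfl

theorem reduce_sublist (ℓ : ℕ) : ∀ x : List ℕ, reduce ℓ x <+ x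
  | [] => Sublist.slnil
  | a :: x => by
    rw [reduce_cons, dropBlock]
    split_ifs
    · exact (drop_sublist _ _).trans ((reduce_sublist ℓ x).cons_cons a)
    · exact (reduce_sublist ℓ x).cons_cons a

theorem reduce_eq_self_of_not_infix {ℓ : ℕ} :
    ∀ {x : List ℕ}, ¬ replicate ℓ 0 <:+: x → reduce ℓ x = x
  | [], _ => rfl
  | a :: x, h => by
    rw [reduce_cons, reduce_eq_self_of_not_infix fun hx => h (hx.trans (suffix_cons a x).isInfix),
      dropBlock, if_neg fun hp => h hp.isInfix]

theorem not_infix_reduce {ℓ : ℕ} (hℓ : 1 ≤ ℓ) : ∀ x : List ℕ, ¬ replicate ℓ 0 <:+: reduce ℓ x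
  | [] => by simp only [reduce, foldr_nil, infix_nil, replicate_eq_nil_iff]; omega
  | a :: x => by
    have ih := not_infix_reduce hℓ x
    rw [reduce_cons, dropBlock]
    split_ifs with hp
    · obtain ⟨k, rfl⟩ := Nat.exists_eq_add_of_le' hℓ
      exact fun h => ih (h.trans (drop_suffix k _).isInfix)
    · intro h
      rcases infix_cons_iff.mp h with h | h
      exacts [hp h, ih h]

theorem reduce_cons_of_ne_zero {ℓ a : ℕ} (hℓ : 1 ≤ ℓ) (ha : a ≠ 0) (x : List ℕ) :
    reduce ℓ (a :: x) = a :: reduce ℓ x := by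
  obtain ⟨k, rfl⟩ := Nat.exists_eq_add_of_le' hℓ
  rw [reduce_cons, dropBlock, if_neg]
  exact fun h => ha (cons_prefix_cons.mp h).1.symm

theorem exists_eq_replicate_append (t : List ℕ) :
    ∃ k s, t = replicate k 0 ++ s ∧ s.head? ≠ some 0 := by
  induction t with
  | nil => exact ⟨0, [], rfl, by simp⟩
  | cons a t ih =>
    by_cases ha : a = 0
    · obtain ⟨k, s, rfl, hs⟩ := ih
      exact ⟨k + 1, s, by rw [ha, replicate_succ, cons_append], hs⟩
    · exact ⟨0, a :: t, rfl, by simpa using ha⟩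

theorem replicate_prefix_replicate_append_iff {m k : ℕ} {s : List ℕ} (hs : s.head? ≠ some 0) :
    replicate m 0 <+: replicate k 0 ++ s ↔ m ≤ k := by
  induction k generalizing m with
  | zero =>
    cases m with
    | zero => simp
    | succ m =>
      simp only [replicate_succ, replicate_zero, nil_append, Nat.le_zero, Nat.add_one_ne_zero,
        iff_false]
      rintro ⟨u, rfl⟩
      exact hs rfl
  | succ k ih =>
    cases m with
    | zero => simp
    | succ m => simp [replicate_succ, cons_prefix_cons, ih]

theorem dropBlock_zero_cons_replicate_append {ℓ k : ℕ} (hk : k < ℓ) {s : List ℕ}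
    (hs : s.head? ≠ some 0) :
    dropBlock ℓ (0 :: (replicate k 0 ++ s)) = replicate ((k + 1) % ℓ) 0 ++ s := by
  rw [dropBlock, ← cons_append, ← replicate_succ]
  split_ifs with hp <;> rw [replicate_prefix_replicate_append_iff hs] at hp
  · rw [show k + 1 = ℓ by omega, Nat.mod_self, drop_left' (length_replicate ..)]
    rfl
  · rw [Nat.mod_eq_of_lt (by omega)]

theorem reduce_replicate_append {ℓ k : ℕ} (hℓ : 1 ≤ ℓ) (hk : k < ℓ) {s v : List ℕ}
    (hs : s.head? ≠ some 0) (hv : reduce ℓ v = replicate k 0 ++ s) (m : ℕ) :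
    reduce ℓ (replicate m 0 ++ v) = replicate ((k + m) % ℓ) 0 ++ s := by
  induction m with
  | zero => simpa [Nat.mod_eq_of_lt hk] using hv
  | succ m ih =>
    rw [replicate_succ, cons_append, reduce_cons, ih,
      dropBlock_zero_cons_replicate_append (Nat.mod_lt _ hℓ) hs, Nat.mod_add_mod, Nat.add_assoc]

theorem reduce_replicate_mul_append {ℓ : ℕ} (hℓ : 1 ≤ ℓ) (c : ℕ) (v : List ℕ) :
    reduce ℓ (replicate (c * ℓ) 0 ++ v) = reduce ℓ v := by
  obtain ⟨k, s, hv, hs⟩ := exists_eq_replicate_append (reduce ℓ v)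
  have hk : k < ℓ := by
    by_contra! hk
    exact not_infix_reduce hℓ v (hv ▸ ((replicate_prefix_replicate_append_iff hs).2 hk).isInfix)
  rw [reduce_replicate_append hℓ hk hs hv, Nat.add_mul_mod_self_right, Nat.mod_eq_of_lt hk, hv]

theorem reduce_eq_of_isOutputInf {ℓ : ℕ} (hℓ : 1 ≤ ℓ) {x z : List ℕ} (h : IsOutputInf ℓ x z) :
    reduce ℓ z = reduce ℓ x := by
  induction h with
  | nil => rfl
  | cons a c _ ih => rw [reduce_cons, reduce_replicate_mul_append hℓ, ih, reduce_cons]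

namespace IsOutputInf

variable {ℓ : ℕ}

theorem replicate_append (m : ℕ) {x z : List ℕ} (h : IsOutputInf ℓ x z) :
    IsOutputInf ℓ (replicate m 0 ++ x) (replicate m 0 ++ z) := by
  induction m with
  | zero => exact h
  | succ m ih => simpa [replicate_succ] using ih.cons 0 0

theorem of_replicate_append {m : ℕ} {r w : List ℕ} (h : IsOutputInf ℓ (replicate m 0 ++ r) w) :
    ∃ c w', w = replicate m 0 ++ (replicate (c * ℓ) 0 ++ w') ∧ IsOutputInf ℓ r w' := by
  induction m generalizing w with
  | zero => exact ⟨0, w, by simp, h⟩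
  | succ m ih =>
    rw [replicate_succ, cons_append] at h
    obtain _ | ⟨_, d, h⟩ := h
    obtain ⟨c, w', rfl, hw'⟩ := ih h
    refine ⟨d + c, w', ?_, hw'⟩
    simp only [replicate_succ, cons_append, ← append_assoc, ← replicate_add]
    congr 3
    ring

theorem confusable {u x y : List ℕ} (hx : IsOutputInf ℓ u x) (hy : IsOutputInf ℓ u y) :
    ConfusableInf ℓ x y := by
  induction hx generalizing y with
  | nil => cases hy; exact ⟨[], .nil, .nil⟩
  | @cons a c _ _ _ ih =>
    cases hy with | cons _ d hy =>
    obtain ⟨z, hxz, hyz⟩ := ih hy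
    refine ⟨a :: (replicate (c * ℓ + d * ℓ) 0 ++ z), ?_, ?_⟩
    · rw [Nat.add_comm, replicate_add, append_assoc]
      exact .cons a d (hxz.replicate_append _)
    · rw [replicate_add, append_assoc]
      exact .cons a c (hyz.replicate_append _)

end IsOutputInf

theorem exists_isOutputInf_reduce {ℓ : ℕ} (hℓ : 1 ≤ ℓ) :
    ∀ x : List ℕ, ∃ c w, x = replicate (c * ℓ) 0 ++ w ∧ IsOutputInf ℓ (reduce ℓ x) w
  | [] => ⟨0, [], by simp, .nil⟩
  | a :: x => by
    obtain ⟨c, w, hx, hw⟩ := exists_isOutputInf_reduce hℓ x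
    have hax : IsOutputInf ℓ (a :: reduce ℓ x) (a :: x) := hx ▸ hw.cons a c
    rw [reduce_cons, dropBlock]
    split_ifs with hp
    · obtain ⟨t, ht⟩ := hp
      rw [← ht] at hax
      obtain ⟨c', w', hw', ht'⟩ := hax.of_replicate_append
      refine ⟨c' + 1, w', ?_, ?_⟩
      · rw [hw', Nat.succ_mul, Nat.add_comm, replicate_add, append_assoc]
      · rwa [← ht, drop_left' (length_replicate ..)]
    · exact ⟨0, a :: x, by simp, hax⟩

theorem isOutputInf_reduce {ℓ : ℕ} (hℓ : 1 ≤ ℓ) {x : List ℕ} (hx : x.head? ≠ some 0) :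
    IsOutputInf ℓ (reduce ℓ x) x := by
  obtain ⟨c, w, rfl, hw⟩ := exists_isOutputInf_reduce hℓ x
  rcases Nat.eq_zero_or_pos (c * ℓ) with hc | hc
  · simpa [hc] using hw
  · obtain ⟨k, hk⟩ := Nat.exists_eq_add_of_lt hc
    simp [hk, replicate_succ] at hx

theorem zeroErrorCodeInf_of_forall_not_infix {ℓ : ℕ} (hℓ : 1 ≤ ℓ) {C : Set (List ℕ)}
    (hC : ∀ x ∈ C, ¬ replicate ℓ 0 <:+: x) : ZeroErrorCodeInf ℓ C := by
  rintro x hx y hy hxy ⟨z, hxz, hyz⟩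
  apply hxy
  rw [← reduce_eq_self_of_not_infix (hC x hx), ← reduce_eq_self_of_not_infix (hC y hy),
    ← reduce_eq_of_isOutputInf hℓ hxz, reduce_eq_of_isOutputInf hℓ hyz]

theorem ZeroErrorCodeInf.injOn_reduce {ℓ : ℕ} (hℓ : 1 ≤ ℓ) {C : Set (List ℕ)}
    (hC : ZeroErrorCodeInf ℓ C) (hhead : ∀ x ∈ C, x.head? ≠ some 0) : Set.InjOn (reduce ℓ) C := by
  intro x hx y hy hxy
  by_contra hne
  refine hC x hx y hy hne (IsOutputInf.confusable (u := reduce ℓ x) ?_ ?_)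
  · exact isOutputInf_reduce hℓ (hhead x hx)
  · exact hxy ▸ isOutputInf_reduce hℓ (hhead y hy)

theorem head?_ne_some_zero_of_mem_S {q n : ℕ} {x : List ℕ} (hx : x ∈ S q n) :
    x.head? ≠ some 0 := by
  obtain ⟨hne, -, -, hhead⟩ := hx
  cases x with
  | nil => exact absurd rfl hne
  | cons a x => simpa using hhead

theorem reduce_mem_D {q ℓ n : ℕ} (hℓ : 1 ≤ ℓ) {x : List ℕ} (hx : x ∈ S q n) :
    reduce ℓ x ∈ D q ℓ n := by
  obtain ⟨hne, hlen, hlt, hhead⟩ := hx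
  obtain ⟨a, x, rfl⟩ := exists_cons_of_ne_nil hne
  have ha : a ≠ 0 := hhead
  refine ⟨⟨?_, (reduce_sublist ℓ _).length_le.trans hlen,
    fun b hb => hlt b ((reduce_sublist ℓ _).subset hb), ?_⟩, not_infix_reduce hℓ _⟩ <;>
    simp [reduce_cons_of_ne_zero hℓ ha, ha]

theorem finite_S (q n : ℕ) : (S q n).Finite := by
  refine ((List.finite_length_le (Fin q) n).image (map Fin.val)).subset ?_
  rintro x ⟨-, hlen, hlt, -⟩
  exact ⟨x.pmap Fin.mk hlt, by simpa using hlen, by simp [map_pmap]⟩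

theorem stmt18_general (q ℓ n : ℕ) (hℓ : 1 ≤ ℓ) :
    ZeroErrorCodeInf ℓ (D q ℓ n) ∧
    (∀ Code : Set (List ℕ), Code ⊆ S q n → ZeroErrorCodeInf ℓ Code →
      Code.ncard ≤ (D q ℓ n).ncard) := by
  refine ⟨zeroErrorCodeInf_of_forall_not_infix hℓ fun x hx => hx.2, fun Code hCode hzec => ?_⟩
  exact Set.ncard_le_ncard_of_injOn (reduce ℓ) (fun x hx => reduce_mem_D hℓ (hCode hx))
    (hzec.injOn_reduce hℓ fun x hx => head?_ne_some_zero_of_mem_S (hCode hx))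
    ((finite_S q n).subset fun x hx => hx.1)

/-- for every `n ≥ 1`, `D q ℓ n` is a zero-error code for the
(ℓ,∞)-0-insertion channel, and every zero-error code `Code ⊆ S q n` for this channel
satisfies `|Code| ≤ |D q ℓ n|`. -/
theorem stmt18 (q ℓ n : ℕ) (hq : 2 ≤ q) (hℓ : 1 ≤ ℓ) (hn : 1 ≤ n) :
    ZeroErrorCodeInf ℓ (D q ℓ n) ∧
    (∀ Code : Set (List ℕ), Code ⊆ S q n → ZeroErrorCodeInf ℓ Code →
      Code.ncard ≤ (D q ℓ n).ncard) :=
  stmt18_general q ℓ n hℓ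

end ZeroErrorDup
end
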